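/- Let M be a Garside monoid with group of fractions G. The quasi-centralizer QZ(G) = {g in G : gM = Mg} is a finitely generated free abelian group, freely generated by the distinct elements among {τ_s : s an atom of M}. -/

import Mathlib

/-- Left-divisibility in a monoid. -/
def LeftDvd {M : Type*} [Monoid M] (a b : M) : Prop := ∃ c, b = a * c

/-- Right-divisibility in a monoid. -/
def MonRightDvd {M : Type*} [Monoid M] (a b : M) : Prop := ∃ c, b = c * a

/-- An element `g` of a monoid is quasi-central if `gM = Mg` as sets. -/
def QuasiCentral {M : Type*} [Monoid M] (g : M) : Prop :=
  ∀ x : M, (∃ m, x = g * m) ↔ (∃ m, x = m * g)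

/-- An atom of a monoid: a non-identity element that is not a product of two
non-identity elements. -/
def MonAtom {M : Type*} [Monoid M] (a : M) : Prop :=
  a ≠ 1 ∧ ∀ b c : M, a = b * c → b = 1 ∨ c = 1

/-- A Garside-monoid structure on a monoid `M`: `M` is cancellative, noetherian
for the factor relation, its left- and right-divisibility orders are lattices,
and it has a quasi-central Garside element `Δ` whose powers are left-divisible
by every element. -/
structure GarsideStruct (M : Type*) [Monoid M] where
  cancel_left : ∀ a b c : M, a * b = a * c → b = c
  cancel_right : ∀ a b c : M, b * a = c * a → b = c
  wf : WellFounded (fun w w' : M => (∃ w1 w2, w' = w1 * w * w2) ∧ w ≠ w')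
  lcmL : M → M → M
  lcmL_left : ∀ a b, LeftDvd a (lcmL a b)
  lcmL_right : ∀ a b, LeftDvd b (lcmL a b)
  lcmL_min : ∀ a b k, LeftDvd a k → LeftDvd b k → LeftDvd (lcmL a b) k
  gcdL : M → M → M
  gcdL_left : ∀ a b, LeftDvd (gcdL a b) a
  gcdL_right : ∀ a b, LeftDvd (gcdL a b) b
  gcdL_max : ∀ a b k, LeftDvd k a → LeftDvd k b → LeftDvd k (gcdL a b)
  lcmR : M → M → M
  lcmR_left : ∀ a b, MonRightDvd a (lcmR a b)
  lcmR_right : ∀ a b, MonRightDvd b (lcmR a b)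
  lcmR_min : ∀ a b k, MonRightDvd a k → MonRightDvd b k → MonRightDvd (lcmR a b) k
  gcdR : M → M → M
  gcdR_left : ∀ a b, MonRightDvd (gcdR a b) a
  gcdR_right : ∀ a b, MonRightDvd (gcdR a b) b
  gcdR_max : ∀ a b k, MonRightDvd k a → MonRightDvd k b → MonRightDvd k (gcdR a b)
  delta : M
  delta_qc : QuasiCentral delta
  delta_pow : ∀ g : M, ∃ n : ℕ, LeftDvd g (delta ^ n)


/-!
Conjugation by a quasi-central `g` is an automorphism `σ_g` of `M` (`m g = g σ_g(m)`), and `τ`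
commutes with every automorphism. Comparing `lcm(x, h)` with `x h = h σ_h(x)` shows that an atom
`x` dividing `h c` but not the quasi-central `h` satisfies `σ_h(x) ∣ c`. Hence the `τ_s` admit no
proper factorisation into quasi-central elements, and for `τ_s ≠ τ_t` one gets
`lcm(τ_s, τ_t) = τ_t τ_s`; by symmetry the `τ_s` commute, and `τ_s ∣ τ_t y` forces `τ_s ∣ y`.
Noetherian induction writes every quasi-central element of `M` as a product of `τ_s`, and since
`g = a b⁻¹ = (a c) Δᵏ⁻¹` with `b c = Δᵏ`, every element of `QZ(G)` is a quotient of two such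
products. Exponents are unique: if `∏ τᵢ^eᵢ = ∏ τᵢ^e'ᵢ` with disjoint supports and `eₖ > 0`, then
`τₖ` divides the left side but, cancelling the other factors one at a time, not the right side.
-/

theorem LeftDvd.refl {M : Type*} [Monoid M] (a : M) : LeftDvd a a := ⟨1, (mul_one a).symm⟩

theorem LeftDvd.trans {M : Type*} [Monoid M] {a b c : M} (hab : LeftDvd a b)
    (hbc : LeftDvd b c) : LeftDvd a c := by
  obtain ⟨x, rfl⟩ := hab
  obtain ⟨y, rfl⟩ := hbc
  exact ⟨x * y, mul_assoc a x y⟩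

theorem leftDvd_mul_right {M : Type*} [Monoid M] (a b : M) : LeftDvd a (a * b) := ⟨b, rfl⟩

theorem LeftDvd.map {M N F : Type*} [Monoid M] [Monoid N] [FunLike F M N]
    [MonoidHomClass F M N] (f : F) {a b : M} (h : LeftDvd a b) : LeftDvd (f a) (f b) := by
  obtain ⟨c, rfl⟩ := h
  exact ⟨f c, map_mul f a c⟩

theorem MonAtom.map {M N : Type*} [Monoid M] [Monoid N] (e : M ≃* N) {a : M} (ha : MonAtom a) :
    MonAtom (e a) := by
  refine ⟨EmbeddingLike.map_ne_one_iff.2 ha.1, fun b c h => ?_⟩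
  have := ha.2 (e.symm b) (e.symm c) (by rw [← map_mul, ← h, e.symm_apply_apply])
  simpa using this

theorem forall_exists_mul_iff {M N : Type*} [Monoid N] {f : M → N} {g : N} :
    (∀ x : N, (∃ m, x = g * f m) ↔ ∃ m, x = f m * g) ↔
      (∀ m, ∃ m', g * f m = f m' * g) ∧ ∀ m, ∃ m', f m * g = g * f m' := by
  refine ⟨fun hg => ⟨fun m => (hg _).1 ⟨m, rfl⟩, fun m => ?_⟩, fun ⟨hl, hr⟩ x => ⟨?_, ?_⟩⟩
  · obtain ⟨m', hm'⟩ := (hg _).2 ⟨m, rfl⟩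
    exact ⟨m', hm'⟩
  · rintro ⟨m, rfl⟩
    exact hl m
  · rintro ⟨m, rfl⟩
    obtain ⟨m', hm'⟩ := hr m
    exact ⟨m', hm'⟩

theorem quasiCentral_iff {M : Type*} [Monoid M] {g : M} :
    QuasiCentral g ↔ (∀ m, ∃ m', g * m = m' * g) ∧ ∀ m, ∃ m', m * g = g * m' :=
  forall_exists_mul_iff (f := id)

theorem QuasiCentral.map {M N : Type*} [Monoid M] [Monoid N] (e : M ≃* N) {g : M}
    (hg : QuasiCentral g) : QuasiCentral (e g) := by
  obtain ⟨hl, hr⟩ := quasiCentral_iff.1 hg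
  refine quasiCentral_iff.2 ⟨fun m => ?_, fun m => ?_⟩
  · obtain ⟨m', hm'⟩ := hl (e.symm m)
    exact ⟨e m', by rw [← e.apply_symm_apply m, ← map_mul, hm', map_mul]⟩
  · obtain ⟨m', hm'⟩ := hr (e.symm m)
    exact ⟨e m', by rw [← e.apply_symm_apply m, ← map_mul, hm', map_mul]⟩

namespace GarsideStruct

variable {M : Type*} [Monoid M]

theorem eq_of_factor_of_factor (GS : GarsideStruct M) {a b : M} (hab : ∃ x y, b = x * a * y)
    (hba : ∃ x y, a = x * b * y) : a = b := by
  by_contra hne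
  exact GS.wf.asymmetric a b ⟨hab, hne⟩ ⟨hba, Ne.symm hne⟩

theorem eq_one_of_eq_mul_mul (GS : GarsideStruct M) {x u v : M} (h : x = u * x * v) :
    u = 1 ∧ v = 1 := by
  have hux : u * x = x :=
    GS.eq_of_factor_of_factor ⟨1, v, by rw [one_mul, ← h]⟩ ⟨u, 1, (mul_one _).symm⟩
  refine ⟨GS.cancel_right x u 1 (by rw [hux, one_mul]), GS.cancel_left x v 1 ?_⟩
  rw [mul_one]
  conv_rhs => rw [h, hux]

theorem eq_one_of_mul_eq_one (GS : GarsideStruct M) {u v : M} (h : u * v = 1) : u = 1 ∧ v = 1 :=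
  GS.eq_one_of_eq_mul_mul (x := 1) (by rw [mul_one, h])

theorem eq_one_of_leftDvd_one (GS : GarsideStruct M) {a : M} (h : LeftDvd a 1) : a = 1 :=
  let ⟨_, hc⟩ := h
  (GS.eq_one_of_mul_eq_one hc.symm).1

theorem leftDvd_antisymm (GS : GarsideStruct M) {a b : M} (hab : LeftDvd a b)
    (hba : LeftDvd b a) : a = b :=
  let ⟨x, hx⟩ := hab
  let ⟨y, hy⟩ := hba
  GS.eq_of_factor_of_factor ⟨1, x, by rw [one_mul, hx]⟩ ⟨1, y, by rw [one_mul, hy]⟩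

theorem exists_atom_leftDvd (GS : GarsideStruct M) {g : M} (hg : g ≠ 1) :
    ∃ s, MonAtom s ∧ LeftDvd s g := by
  induction g using GS.wf.induction with
  | _ g ih =>
    by_cases ha : MonAtom g
    · exact ⟨g, ha, LeftDvd.refl g⟩
    obtain ⟨b, c, rfl, hb, hc⟩ : ∃ b c, g = b * c ∧ b ≠ 1 ∧ c ≠ 1 := by
      simpa [MonAtom, hg] using ha
    have hfactor : (∃ x y, b * c = x * b * y) ∧ b ≠ b * c :=
      ⟨⟨1, c, by rw [one_mul]⟩, fun h => hc (GS.cancel_left b c 1 (by rw [mul_one, ← h]))⟩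
    obtain ⟨s, hs, hsb⟩ := ih b hfactor hb
    exact ⟨s, hs, hsb.trans (leftDvd_mul_right b c)⟩

theorem leftDvd_lcmL_iff (GS : GarsideStruct M) {a b x : M} :
    LeftDvd (GS.lcmL a b) x ↔ LeftDvd a x ∧ LeftDvd b x :=
  ⟨fun h => ⟨(GS.lcmL_left a b).trans h, (GS.lcmL_right a b).trans h⟩,
    fun h => GS.lcmL_min a b x h.1 h.2⟩

theorem monRightDvd_lcmR_iff (GS : GarsideStruct M) {a b x : M} :
    MonRightDvd (GS.lcmR a b) x ↔ MonRightDvd a x ∧ MonRightDvd b x := by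
  refine ⟨fun ⟨y, hy⟩ => ⟨?_, ?_⟩, fun h => GS.lcmR_min a b x h.1 h.2⟩
  · obtain ⟨z, hz⟩ := GS.lcmR_left a b
    exact ⟨y * z, by rw [hy, hz, mul_assoc]⟩
  · obtain ⟨z, hz⟩ := GS.lcmR_right a b
    exact ⟨y * z, by rw [hy, hz, mul_assoc]⟩

theorem lcmL_comm (GS : GarsideStruct M) (a b : M) : GS.lcmL a b = GS.lcmL b a :=
  GS.leftDvd_antisymm ((GS.leftDvd_lcmL_iff).2 ⟨GS.lcmL_right b a, GS.lcmL_left b a⟩)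
    ((GS.leftDvd_lcmL_iff).2 ⟨GS.lcmL_right a b, GS.lcmL_left a b⟩)

-- For quasi-central `a`, `QuasiCentral a` is literally `∀ x, LeftDvd a x ↔ MonRightDvd a x`,
-- so the left multiples of `lcmL a b` are the right multiples of `lcmR a b`.
theorem quasiCentral_lcmL (GS : GarsideStruct M) {a b : M} (ha : QuasiCentral a)
    (hb : QuasiCentral b) : QuasiCentral (GS.lcmL a b) := by
  have key : ∀ x, LeftDvd (GS.lcmL a b) x ↔ MonRightDvd (GS.lcmR a b) x := fun x => by
    rw [GS.leftDvd_lcmL_iff, GS.monRightDvd_lcmR_iff]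
    exact and_congr (ha x) (hb x)
  obtain ⟨u, hu⟩ := (key _).1 (LeftDvd.refl _)
  obtain ⟨v, hv⟩ := (key _).2 ⟨1, (one_mul _).symm⟩
  have hLR : GS.lcmL a b = GS.lcmR a b :=
    GS.eq_of_factor_of_factor ⟨1, v, by rw [one_mul, ← hv]⟩ ⟨u, 1, by rw [mul_one, ← hu]⟩
  intro x
  rw [← hLR] at key
  exact key x

theorem quasiCentral_right_of_mul (GS : GarsideStruct M) {a b : M} (hab : QuasiCentral (a * b))
    (ha : QuasiCentral a) : QuasiCentral b := by
  obtain ⟨habl, habr⟩ := quasiCentral_iff.1 hab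
  obtain ⟨hal, har⟩ := quasiCentral_iff.1 ha
  refine quasiCentral_iff.2 ⟨fun m => ?_, fun m => ?_⟩
  · obtain ⟨m₁, hm₁⟩ := habl m
    obtain ⟨m₂, hm₂⟩ := har m₁
    refine ⟨m₂, GS.cancel_left a _ _ ?_⟩
    rw [← mul_assoc, hm₁, ← mul_assoc, hm₂, mul_assoc]
  · obtain ⟨m₁, hm₁⟩ := hal m
    obtain ⟨m₂, hm₂⟩ := habr m₁
    refine ⟨m₂, GS.cancel_left a _ _ ?_⟩
    rw [← mul_assoc, hm₁, mul_assoc, hm₂, mul_assoc]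

/-- Conjugation `m ↦ g⁻¹ m g` by a quasi-central `g`, as an automorphism of `M`. -/
noncomputable def conj (GS : GarsideStruct M) {g : M} (hg : QuasiCentral g) : M ≃* M :=
  let σ : M → M := fun m => ((hg (m * g)).2 ⟨m, rfl⟩).choose
  have hσ : ∀ m, m * g = g * σ m := fun m => ((hg (m * g)).2 ⟨m, rfl⟩).choose_spec
  MulEquiv.ofBijective (M := M) (N := M) (F := M →* M)
    { toFun := σ
      map_one' := GS.cancel_left g _ _ (by rw [← hσ, one_mul, mul_one])
      map_mul' := fun m m' => GS.cancel_left g _ _ <| by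
        rw [← hσ, mul_assoc, hσ, ← mul_assoc, hσ, mul_assoc] }
    ⟨fun m m' h => GS.cancel_right g _ _ (by rw [hσ, hσ]; exact congrArg (g * ·) h),
      fun m =>
        let ⟨x, hx⟩ := (hg (g * m)).1 ⟨m, rfl⟩
        ⟨x, GS.cancel_left g _ _ ((hσ x).symm.trans hx.symm)⟩⟩

theorem mul_conj (GS : GarsideStruct M) {g : M} (hg : QuasiCentral g) (m : M) :
    m * g = g * GS.conj hg m :=
  ((hg (m * g)).2 ⟨m, rfl⟩).choose_spec

theorem conj_leftDvd_of_leftDvd_mul (GS : GarsideStruct M) {h c x : M} (hh : QuasiCentral h)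
    (hx : MonAtom x) (hxhc : LeftDvd x (h * c)) (hxh : ¬LeftDvd x h) :
    LeftDvd (GS.conj hh x) c := by
  obtain ⟨c₁, hc₁⟩ := GS.lcmL_right x h
  obtain ⟨z, hz⟩ := GS.lcmL_min x h (x * h) (leftDvd_mul_right x h) ⟨_, GS.mul_conj hh x⟩
  have hσ : GS.conj hh x = c₁ * z :=
    GS.cancel_left h _ _ (by rw [← GS.mul_conj, hz, hc₁, mul_assoc])
  rcases (hx.map (GS.conj hh)).2 c₁ z hσ with hc₁1 | hz1
  · exact absurd (by simpa [hc₁, hc₁1] using GS.lcmL_left x h) hxh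
  · obtain ⟨w, hw⟩ := GS.lcmL_min x h (h * c) hxhc (leftDvd_mul_right h c)
    exact ⟨w, GS.cancel_left h _ _ (by rw [hw, hc₁, hσ, hz1, mul_one, mul_assoc])⟩

end GarsideStruct

structure IsQuasiCentralHull {M : Type*} [Monoid M] (τ : M → M) : Prop where
  quasiCentral : ∀ g, QuasiCentral (τ g)
  leftDvd : ∀ g, LeftDvd g (τ g)
  min : ∀ g h, QuasiCentral h → LeftDvd g h → LeftDvd (τ g) h

namespace IsQuasiCentralHull

variable {M : Type*} [Monoid M] {τ : M → M}

theorem ne_one (hτ : IsQuasiCentralHull τ) (GS : GarsideStruct M) {s : M} (hs : MonAtom s) :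
    τ s ≠ 1 :=
  fun h => hs.1 (GS.eq_one_of_leftDvd_one (h ▸ hτ.leftDvd s))

theorem map_mulEquiv (hτ : IsQuasiCentralHull τ) (GS : GarsideStruct M) (e : M ≃* M) (m : M) :
    e (τ m) = τ (e m) := by
  refine GS.leftDvd_antisymm ?_ (hτ.min _ _ ((hτ.quasiCentral m).map e) ((hτ.leftDvd m).map e))
  have h := hτ.min m _ ((hτ.quasiCentral (e m)).map e.symm)
    (by simpa using (hτ.leftDvd (e m)).map e.symm)
  simpa using h.map e

theorem eq_one_or_eq_one_of_eq_mul (hτ : IsQuasiCentralHull τ) (GS : GarsideStruct M)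
    {s p q : M} (hs : MonAtom s) (hp : QuasiCentral p) (hq : QuasiCentral q)
    (hspq : τ s = p * q) : p = 1 ∨ q = 1 := by
  refine or_iff_not_imp_right.2 fun hq1 => ?_
  have hsp : ¬LeftDvd s p := fun hsp => hq1 <| by
    obtain ⟨y, hy⟩ := hτ.min s p hp hsp
    have h : τ s * (y * q) = τ s * 1 := by rw [mul_one, ← mul_assoc, ← hy, hspq]
    exact (GS.eq_one_of_mul_eq_one (GS.cancel_left _ _ _ h)).2
  obtain ⟨q₂, hq₂⟩ :=
    hτ.min _ q hq (GS.conj_leftDvd_of_leftDvd_mul hp hs (hspq ▸ hτ.leftDvd s) hsp)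
  -- `τ s = p * σ_p(τ s) * q₂ = τ s * p * q₂`
  have h : τ s * (p * q₂) = τ s * 1 := by
    rw [mul_one, ← mul_assoc, GS.mul_conj hp, hτ.map_mulEquiv GS, mul_assoc, ← hq₂, hspq]
  exact (GS.eq_one_of_mul_eq_one (GS.cancel_left _ _ _ h)).1

theorem eq_of_leftDvd (hτ : IsQuasiCentralHull τ) (GS : GarsideStruct M) {s u : M}
    (hs : MonAtom s) (hu : MonAtom u) (h : LeftDvd (τ u) (τ s)) : τ u = τ s := by
  obtain ⟨r, hr⟩ := h
  have hr_qc := GS.quasiCentral_right_of_mul (hr ▸ hτ.quasiCentral s) (hτ.quasiCentral u)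
  rcases hτ.eq_one_or_eq_one_of_eq_mul GS hs (hτ.quasiCentral u) hr_qc hr with h | h
  · exact absurd h (hτ.ne_one GS hu)
  · rw [hr, h, mul_one]

theorem lcmL_eq_mul (hτ : IsQuasiCentralHull τ) (GS : GarsideStruct M) {s t : M}
    (hs : MonAtom s) (ht : MonAtom t) (hst : τ s ≠ τ t) :
    GS.lcmL (τ s) (τ t) = τ t * τ s := by
  have hqs := hτ.quasiCentral s
  obtain ⟨a, ha⟩ := GS.lcmL_left (τ s) (τ t)
  have ha_qc : QuasiCentral a :=
    GS.quasiCentral_right_of_mul (ha ▸ GS.quasiCentral_lcmL hqs (hτ.quasiCentral t)) hqs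
  have hts : ¬LeftDvd t (τ s) := fun h => hst (hτ.eq_of_leftDvd GS hs ht (hτ.min t _ hqs h)).symm
  have hta : LeftDvd t (τ s * a) := ha ▸ (hτ.leftDvd t).trans (GS.lcmL_right _ _)
  obtain ⟨a₂, ha₂⟩ := hτ.min _ a ha_qc (GS.conj_leftDvd_of_leftDvd_mul hqs ht hta hts)
  have hcomm : τ t * τ s = τ s * τ (GS.conj hqs t) := by
    rw [GS.mul_conj hqs (τ t), hτ.map_mulEquiv GS]
  have hL : GS.lcmL (τ s) (τ t) = τ s * τ (GS.conj hqs t) * a₂ := by rw [ha, ha₂, mul_assoc]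
  obtain ⟨z, hz⟩ := GS.lcmL_min _ _ (τ t * τ s) ⟨_, hcomm⟩ (leftDvd_mul_right _ _)
  rw [hcomm, hL, mul_assoc _ a₂] at hz
  have ha₂1 := (GS.eq_one_of_mul_eq_one (GS.cancel_left _ _ _ (hz.symm.trans (mul_one _).symm))).1
  rw [hL, ha₂1, mul_one, hcomm]

theorem commute (hτ : IsQuasiCentralHull τ) (GS : GarsideStruct M) {s t : M}
    (hs : MonAtom s) (ht : MonAtom t) : Commute (τ s) (τ t) := by
  by_cases hst : τ s = τ t
  · rw [hst]
  · rw [Commute, SemiconjBy, ← hτ.lcmL_eq_mul GS ht hs (Ne.symm hst), GS.lcmL_comm, hτ.lcmL_eq_mul GS hs ht hst]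

theorem leftDvd_of_leftDvd_mul (hτ : IsQuasiCentralHull τ) (GS : GarsideStruct M) {s t y : M}
    (hs : MonAtom s) (ht : MonAtom t) (hst : τ s ≠ τ t) (h : LeftDvd (τ s) (τ t * y)) :
    LeftDvd (τ s) y := by
  obtain ⟨w, hw⟩ := GS.lcmL_min (τ s) (τ t) (τ t * y) h (leftDvd_mul_right _ _)
  rw [hτ.lcmL_eq_mul GS hs ht hst, mul_assoc] at hw
  exact ⟨w, GS.cancel_left (τ t) _ _ hw⟩

theorem mem_closure (hτ : IsQuasiCentralHull τ) (GS : GarsideStruct M) {g : M}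
    (hg : QuasiCentral g) : g ∈ Submonoid.closure (τ '' {s | MonAtom s}) := by
  induction g using GS.wf.induction with
  | _ g ih =>
    by_cases hg1 : g = 1
    · exact hg1 ▸ one_mem _
    obtain ⟨s, hs, hsg⟩ := GS.exists_atom_leftDvd hg1
    obtain ⟨g₁, rfl⟩ := hτ.min s g hg hsg
    have hfactor : (∃ x y, τ s * g₁ = x * g₁ * y) ∧ g₁ ≠ τ s * g₁ :=
      ⟨⟨τ s, 1, by rw [mul_one]⟩,
        fun h => hτ.ne_one GS hs (GS.cancel_right g₁ _ _ (by rw [one_mul, ← h]))⟩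
    exact mul_mem (Submonoid.subset_closure ⟨s, hs, rfl⟩)
      (ih g₁ hfactor (GS.quasiCentral_right_of_mul hg (hτ.quasiCentral s)))

end IsQuasiCentralHull

section CommutingFamily

variable {N : Type*} [Monoid N] {n : ℕ} {c : Fin n → N}

open scoped IsMulCommutative in
theorem leftDvd_ofFn_pow_prod (hc : ∀ i j, c i * c j = c j * c i) {e : Fin n → ℕ} {k : Fin n}
    (hk : e k ≠ 0) : LeftDvd (c k) (List.ofFn fun i => c i ^ e i).prod := by
  have := Submonoid.isMulCommutative_closure N (s := Set.range c)
    (by rintro _ ⟨i, rfl⟩ _ ⟨j, rfl⟩; exact hc i j)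
  let c' (i : Fin n) : Submonoid.closure (Set.range c) := ⟨c i, Submonoid.subset_closure ⟨i, rfl⟩⟩
  obtain ⟨z, hz⟩ : c' k ∣ ∏ i, c' i ^ e i :=
    (dvd_pow_self _ hk).trans (Finset.dvd_prod_of_mem _ (Finset.mem_univ k))
  refine ⟨z, ?_⟩
  have := congrArg Subtype.val hz
  rwa [← Fin.prod_ofFn, Submonoid.coe_list_prod, List.map_ofFn] at this

theorem not_leftDvd_list_prod {a : N} (ha : ¬LeftDvd a 1) {L : List N}
    (hL : ∀ x ∈ L, ∀ y, LeftDvd a (x * y) → LeftDvd a y) : ¬LeftDvd a L.prod := by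
  induction L with
  | nil => exact ha
  | cons x L ih =>
    rw [List.prod_cons]
    exact fun h => ih (fun y hy => hL y (List.mem_cons_of_mem x hy)) (hL x List.mem_cons_self _ h)

theorem leftDvd_of_leftDvd_pow_mul {a b : N} (h : ∀ y, LeftDvd a (b * y) → LeftDvd a y) (m : ℕ)
    {y : N} : LeftDvd a (b ^ m * y) → LeftDvd a y := by
  induction m with
  | zero => simp
  | succ m ih =>
    rw [pow_succ', mul_assoc]
    exact fun hd => ih (h _ hd)

theorem eq_zero_of_ofFn_pow_prod_eq (hc : ∀ i j, c i * c j = c j * c i)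
    (hcancel : ∀ i j, i ≠ j → ∀ y, LeftDvd (c i) (c j * y) → LeftDvd (c i) y)
    (hone : ∀ i, ¬LeftDvd (c i) 1) {e e' : Fin n → ℕ} (hdisj : ∀ i, e i = 0 ∨ e' i = 0)
    (heq : (List.ofFn fun i => c i ^ e i).prod = (List.ofFn fun i => c i ^ e' i).prod) :
    e = 0 := by
  funext k
  by_contra hk
  have he'k : e' k = 0 := (hdisj k).resolve_left hk
  refine not_leftDvd_list_prod (hone k) ?_ (heq ▸ leftDvd_ofFn_pow_prod hc hk)
  intro x hx y
  obtain ⟨i, rfl⟩ := List.mem_ofFn.1 hx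
  by_cases hik : i = k
  · subst hik
    rw [he'k, pow_zero, one_mul]
    exact id
  · exact leftDvd_of_leftDvd_pow_mul (hcancel k i (Ne.symm hik)) (e' i)

end CommutingFamily

section CommutingFamilyGroup

variable {G : Type*} [Group G] {n : ℕ} {b : Fin n → G}

open scoped IsMulCommutative in
theorem ofFn_zpow_prod_add (hb : ∀ i j, b i * b j = b j * b i) (f f' : Fin n → ℤ) :
    (List.ofFn fun i => b i ^ (f i + f' i)).prod =
      (List.ofFn fun i => b i ^ f i).prod * (List.ofFn fun i => b i ^ f' i).prod := by
  have := Subgroup.isMulCommutative_closure (k := Set.range b)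
    (by rintro _ ⟨i, rfl⟩ _ ⟨j, rfl⟩; exact hb i j)
  let b' (i : Fin n) : Subgroup.closure (Set.range b) := ⟨b i, Subgroup.subset_closure ⟨i, rfl⟩⟩
  have h (f : Fin n → ℤ) : (List.ofFn fun i => b i ^ f i).prod = ↑(∏ i, b' i ^ f i) := by
    rw [← Fin.prod_ofFn, Subgroup.val_list_prod, List.map_ofFn]
    rfl
  simp only [h]
  simp only [zpow_add, Finset.prod_mul_distrib, Subgroup.coe_mul]

open scoped IsMulCommutative in
theorem ofFn_zpow_prod_single (hb : ∀ i j, b i * b j = b j * b i) (k : Fin n) :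
    (List.ofFn fun i => b i ^ (Pi.single k 1 : Fin n → ℤ) i).prod = b k := by
  have := Subgroup.isMulCommutative_closure (k := Set.range b)
    (by rintro _ ⟨i, rfl⟩ _ ⟨j, rfl⟩; exact hb i j)
  let b' (i : Fin n) : Subgroup.closure (Set.range b) := ⟨b i, Subgroup.subset_closure ⟨i, rfl⟩⟩
  have h := congrArg Subtype.val (Fin.prod_ofFn fun i => b' i ^ (Pi.single k 1 : Fin n → ℤ) i)
  rw [Subgroup.val_list_prod, List.map_ofFn] at h
  refine h.trans ?_
  simp [Pi.single_apply, b']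

theorem mem_closure_range_iff (hb : ∀ i j, b i * b j = b j * b i) {g : G} :
    g ∈ Subgroup.closure (Set.range b) ↔
      ∃ f : Fin n → ℤ, g = (List.ofFn fun i => b i ^ f i).prod := by
  refine ⟨fun hg => ?_, ?_⟩
  · induction hg using Subgroup.closure_induction with
    | mem _ hx =>
      obtain ⟨k, rfl⟩ := hx
      exact ⟨Pi.single k 1, (ofFn_zpow_prod_single hb k).symm⟩
    | one => exact ⟨0, by simp⟩
    | mul _ _ _ _ hx hy =>
      obtain ⟨f, rfl⟩ := hx
      obtain ⟨f', rfl⟩ := hy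
      exact ⟨f + f', ofFn_zpow_prod_add hb f f' |>.symm⟩
    | inv _ _ hx =>
      obtain ⟨f, rfl⟩ := hx
      refine ⟨-f, (eq_inv_of_mul_eq_one_left ?_).symm⟩
      rw [← ofFn_zpow_prod_add hb]
      simp
  · rintro ⟨f, rfl⟩
    refine list_prod_mem fun x hx => ?_
    obtain ⟨i, rfl⟩ := List.mem_ofFn.1 hx
    exact zpow_mem (Subgroup.subset_closure (Set.mem_range_self i)) _

end CommutingFamilyGroup

section QuasiCentralizer

variable {M G : Type*} [Monoid M] [Group G]

def quasiCentralizer (φ : M →* G) : Subgroup G where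
  carrier := {g | ∀ x : G, (∃ m : M, x = g * φ m) ↔ (∃ m : M, x = φ m * g)}
  one_mem' := forall_exists_mul_iff.2 ⟨fun m => ⟨m, by simp⟩, fun m => ⟨m, by simp⟩⟩
  mul_mem' {g h} hg hh := by
    obtain ⟨hg₁, hg₂⟩ := forall_exists_mul_iff.1 hg
    obtain ⟨hh₁, hh₂⟩ := forall_exists_mul_iff.1 hh
    refine forall_exists_mul_iff.2 ⟨fun m => ?_, fun m => ?_⟩
    · obtain ⟨m₁, hm₁⟩ := hh₁ m
      obtain ⟨m₂, hm₂⟩ := hg₁ m₁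
      exact ⟨m₂, by rw [mul_assoc, hm₁, ← mul_assoc, hm₂, mul_assoc]⟩
    · obtain ⟨m₁, hm₁⟩ := hg₂ m
      obtain ⟨m₂, hm₂⟩ := hh₂ m₁
      exact ⟨m₂, by rw [← mul_assoc, hm₁, mul_assoc, hm₂, mul_assoc]⟩
  inv_mem' {g} hg := by
    obtain ⟨hg₁, hg₂⟩ := forall_exists_mul_iff.1 hg
    refine forall_exists_mul_iff.2 ⟨fun m => ?_, fun m => ?_⟩
    · obtain ⟨m', hm'⟩ := hg₂ m
      exact ⟨m', by rw [eq_mul_inv_iff_mul_eq, mul_assoc, hm', inv_mul_cancel_left]⟩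
    · obtain ⟨m', hm'⟩ := hg₁ m
      exact ⟨m', by rw [eq_inv_mul_iff_mul_eq, ← mul_assoc, hm', mul_inv_cancel_right]⟩

theorem map_mem_quasiCentralizer_iff {φ : M →* G} (hφ : Function.Injective φ) {a : M} :
    φ a ∈ quasiCentralizer φ ↔ QuasiCentral a := by
  change (∀ x : G, (∃ m, x = φ a * φ m) ↔ ∃ m, x = φ m * φ a) ↔ _
  rw [forall_exists_mul_iff, quasiCentral_iff]
  simp only [← map_mul, hφ.eq_iff]

theorem exists_eq_mul_inv_of_mem_quasiCentralizer (GS : GarsideStruct M) {φ : M →* G}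
    (hφ : Function.Injective φ) (hfrac : ∀ g : G, ∃ a b : M, g = φ a * (φ b)⁻¹) {g : G}
    (hg : g ∈ quasiCentralizer φ) :
    ∃ x y, QuasiCentral x ∧ QuasiCentral y ∧ g = φ x * (φ y)⁻¹ := by
  obtain ⟨a, d, rfl⟩ := hfrac g
  obtain ⟨k, c, hc⟩ := GS.delta_pow d
  have hΔ : φ (GS.delta ^ k) ∈ quasiCentralizer φ := by
    rw [map_pow]
    exact pow_mem ((map_mem_quasiCentralizer_iff hφ).2 GS.delta_qc) k
  have hg' : φ a * (φ d)⁻¹ = φ (a * c) * (φ (GS.delta ^ k))⁻¹ := by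
    rw [hc, map_mul, map_mul, mul_inv_rev]
    group
  refine ⟨a * c, GS.delta ^ k, ?_, (map_mem_quasiCentralizer_iff hφ).1 hΔ, hg'⟩
  rw [← map_mem_quasiCentralizer_iff hφ, ← inv_mul_cancel_right (φ (a * c)) (φ (GS.delta ^ k)),
    ← hg']
  exact mul_mem hg hΔ

theorem quasiCentralizer_eq_closure (GS : GarsideStruct M) {φ : M →* G}
    (hφ : Function.Injective φ) (hfrac : ∀ g : G, ∃ a b : M, g = φ a * (φ b)⁻¹) {τ : M → M}
    (hτ : IsQuasiCentralHull τ) {n : ℕ} {t : Fin n → M}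
    (ht : Set.range t = τ '' {s | MonAtom s}) :
    quasiCentralizer φ = Subgroup.closure (Set.range fun i => φ (t i)) := by
  refine le_antisymm (fun g hg => ?_) (Subgroup.closure_le _ |>.2 ?_)
  · have hle : Submonoid.closure (Set.range t) ≤
        (Subgroup.closure (Set.range fun i => φ (t i))).toSubmonoid.comap φ :=
      Submonoid.closure_le.2 (Set.range_subset_iff.2 fun i => Subgroup.subset_closure ⟨i, rfl⟩)
    have hmem {m : M} (hm : QuasiCentral m) : m ∈ Submonoid.closure (Set.range t) :=
      ht ▸ hτ.mem_closure GS hm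
    obtain ⟨x, y, hx, hy, rfl⟩ := exists_eq_mul_inv_of_mem_quasiCentralizer GS hφ hfrac hg
    exact mul_mem (hle (hmem hx)) (inv_mem (hle (hmem hy)))
  · rintro _ ⟨i, rfl⟩
    obtain ⟨s, hs, hst⟩ : t i ∈ τ '' {s | MonAtom s} := ht ▸ Set.mem_range_self i
    exact (map_mem_quasiCentralizer_iff hφ).2 (hst ▸ hτ.quasiCentral s)

theorem ofFn_zpow_prod_map_injective {φ : M →* G} (hφ : Function.Injective φ) {n : ℕ}
    {c : Fin n → M} (hc : ∀ i j, c i * c j = c j * c i)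
    (hcancel : ∀ i j, i ≠ j → ∀ y, LeftDvd (c i) (c j * y) → LeftDvd (c i) y)
    (hone : ∀ i, ¬LeftDvd (c i) 1) :
    Function.Injective fun f : Fin n → ℤ => (List.ofFn fun i => φ (c i) ^ f i).prod := by
  intro f f' h
  dsimp only at h
  have hb : ∀ i j, φ (c i) * φ (c j) = φ (c j) * φ (c i) := fun i j => by
    rw [← map_mul, hc, map_mul]
  have hnat (e : Fin n → ℕ) :
      (List.ofFn fun i => φ (c i) ^ (e i : ℤ)).prod = φ (List.ofFn fun i => c i ^ e i).prod := by
    simp [map_list_prod, List.map_ofFn, Function.comp_def]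
  -- write `f - f' = e - e'` with `e, e' ≥ 0` of disjoint supports
  set e := fun i => (f i - f' i).toNat
  set e' := fun i => (f' i - f i).toNat
  have he : (List.ofFn fun i => c i ^ e i).prod = (List.ofFn fun i => c i ^ e' i).prod := by
    refine hφ ?_
    rw [← hnat, ← hnat]
    refine mul_left_cancel (a := (List.ofFn fun i => φ (c i) ^ f' i).prod) ?_
    rw [← ofFn_zpow_prod_add hb, ← h, ← ofFn_zpow_prod_add hb]
    congr
    funext i
    congr 1
    simp only [e, e']
    omega
  have hdisj : ∀ i, e i = 0 ∨ e' i = 0 := fun i => by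
    simp only [e, e']
    omega
  have h₁ := eq_zero_of_ofFn_pow_prod_eq hc hcancel hone hdisj he
  have h₂ := eq_zero_of_ofFn_pow_prod_eq hc hcancel hone (fun i => (hdisj i).symm) he.symm
  funext i
  have h₁i : (f i - f' i).toNat = 0 := congrFun h₁ i
  have h₂i : (f' i - f i).toNat = 0 := congrFun h₂ i
  omega

end QuasiCentralizer

/-- the quasi-centralizer `QZ(G) = {g ∈ G : gMg⁻¹ = M}` of the
group of fractions `G` of a Garside monoid `M` (with finitely many atoms) is a
finitely generated free abelian group, freely generated by the distinct
elements among the `τ_s` for `s` an atom of `M`. -/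
theorem stmt_9 (M : Type*) [Monoid M] (GS : GarsideStruct M)
    (G : Type*) [Group G] (φ : M →* G) (hφ : Function.Injective φ)
    (hfrac : ∀ g : G, ∃ a b : M, g = φ a * (φ b)⁻¹)
    (τ : M → M)
    (hτqc : ∀ g, QuasiCentral (τ g))
    (hτdvd : ∀ g, LeftDvd g (τ g))
    (hτmin : ∀ g h, QuasiCentral h → LeftDvd g h → LeftDvd (τ g) h)
    (hfin : {s : M | MonAtom s}.Finite) :
    ∃ (n : ℕ) (b : Fin n → G),
      Function.Injective b ∧
      Set.range b = φ '' (τ '' {s : M | MonAtom s}) ∧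
      (∀ i j, b i * b j = b j * b i) ∧
      ∀ g : G,
        (∀ x : G, (∃ m : M, x = g * φ m) ↔ (∃ m : M, x = φ m * g)) ↔
        ∃! f : Fin n → ℤ, g = (List.ofFn fun i => b i ^ f i).prod := by
  have hτ : IsQuasiCentralHull τ := ⟨hτqc, hτdvd, hτmin⟩
  obtain ⟨n, t, ht⟩ := (hfin.image τ).fin_embedding
  have ht_mem (i : Fin n) : ∃ s, MonAtom s ∧ τ s = t i := by
    have hi := Set.mem_range_self (f := t) i
    rwa [ht] at hi
  choose s hs hst using ht_mem
  have hcomm (i j : Fin n) : t i * t j = t j * t i := by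
    rw [← hst, ← hst]
    exact (hτ.commute GS (hs i) (hs j)).eq
  have hcancel (i j : Fin n) (hij : i ≠ j) (y : M) : LeftDvd (t i) (t j * y) → LeftDvd (t i) y := by
    rw [← hst, ← hst]
    exact hτ.leftDvd_of_leftDvd_mul GS (hs i) (hs j) (by rw [hst, hst]; exact t.injective.ne hij)
  have hone (i : Fin n) : ¬LeftDvd (t i) 1 := fun h =>
    hτ.ne_one GS (hs i) ((hst i).trans (GS.eq_one_of_leftDvd_one h))
  have hb (i j : Fin n) : φ (t i) * φ (t j) = φ (t j) * φ (t i) := by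
    rw [← map_mul, hcomm, map_mul]
  refine ⟨n, fun i => φ (t i), hφ.comp t.injective, by rw [← ht, ← Set.range_comp]; rfl, hb,
    fun g => ?_⟩
  change g ∈ quasiCentralizer φ ↔ _
  rw [quasiCentralizer_eq_closure GS hφ hfrac hτ ht, mem_closure_range_iff hb]
  exact ⟨fun ⟨f, hf⟩ => ⟨f, hf, fun f' hf' =>
      ofFn_zpow_prod_map_injective hφ hcomm hcancel hone (hf'.symm.trans hf)⟩,
    fun ⟨f, hf, _⟩ => ⟨f, hf⟩⟩
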